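/- For fixed t > 0, the map λ ↦ K(t,λ) = -(t + √(-λ))², defined on the open left half-plane ℂ_{--} = {x+iy : x<0} with the principal branch of the square root, is holomorphic and maps ℂ_{--} into the set {x + iy : x < -t·√(t² + 2|y|)}; in particular its image lies in ℂ_{--}. -/

import Mathlib

/-! Since `Re(-λ) > 0`, the principal root `w = √(-λ)` lies in the sector `|Im w| < Re w`.
Writing `u = t + Re w` and `c = |Im w|`, one has `Re K = c² - u²` and `|Im K| = 2uc`, and the
bound becomes `t √(t² + 4uc) < (u - c)(u + c)`, which follows from `t < u - c` because
`(u - c)² + 4uc = (u + c)²`. -/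

open Complex

lemma Real.mul_sqrt_add_lt_sq_sub_sq {t u c : ℝ} (ht : 0 ≤ t) (hc : 0 ≤ c) (h : t < u - c) :
    t * √(t ^ 2 + 4 * u * c) < u ^ 2 - c ^ 2 := by
  have hsqrt : √(t ^ 2 + 4 * u * c) < u + c := by
    rw [Real.sqrt_lt' (by linarith)]
    nlinarith
  calc t * √(t ^ 2 + 4 * u * c) < (u - c) * (u + c) :=
        mul_lt_mul'' h hsqrt ht (Real.sqrt_nonneg _)
    _ = u ^ 2 - c ^ 2 := by ring

lemma Complex.abs_im_lt_re_cpow_inv_two {z : ℂ} (hz : 0 < z.re) :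
    |(z ^ (2⁻¹ : ℂ)).im| < (z ^ (2⁻¹ : ℂ)).re := by
  rw [cpow_inv_two_re, abs_cpow_inv_two_im]
  have := re_le_norm z
  exact Real.sqrt_lt_sqrt (by linarith) (by linarith)

lemma Complex.re_neg_sq_add_lt {t : ℝ} (ht : 0 ≤ t) {w : ℂ} (hw : |w.im| < w.re) :
    (-(t + w) ^ 2).re < -t * √(t ^ 2 + 2 * |(-(t + w) ^ 2).im|) := by
  have hu : 0 ≤ t + w.re := by linarith [abs_nonneg w.im]
  have hre : (-(t + w) ^ 2).re = |w.im| ^ 2 - (t + w.re) ^ 2 := by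
    simp only [neg_re, sq, mul_re, add_re, ofReal_re, add_im, ofReal_im, zero_add, abs_mul_abs_self]
    ring
  have him : |(-(t + w) ^ 2).im| = 2 * (t + w.re) * |w.im| := by
    simp only [neg_im, sq, mul_im, add_re, ofReal_re, add_im, ofReal_im, zero_add, abs_neg]
    rw [show (t + w.re) * w.im + w.im * (t + w.re) = 2 * (t + w.re) * w.im by ring, abs_mul,
      abs_of_nonneg (by linarith)]
  rw [hre, him, ← mul_assoc, show 2 * (2 * (t + w.re)) = 4 * (t + w.re) by ring]
  have hgap : t < t + w.re - |w.im| := by linarith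
  linarith [Real.mul_sqrt_add_lt_sq_sub_sq ht (abs_nonneg w.im) hgap]

/-- For fixed `t > 0`, the map `λ ↦ -(t + √(-λ))²` is holomorphic on the open left
half-plane and maps it into `{x + iy : x < -t √(t² + 2|y|)}`. -/
theorem stmt16 (t : ℝ) (ht : 0 < t) :
    DifferentiableOn ℂ (fun l : ℂ => -(t + (-l) ^ (1 / 2 : ℂ)) ^ 2) {l : ℂ | l.re < 0} ∧
      ∀ l : ℂ, l.re < 0 →
        (-(t + (-l) ^ (1 / 2 : ℂ)) ^ 2).re <
          -t * Real.sqrt (t ^ 2 + 2 * |(-(t + (-l) ^ (1 / 2 : ℂ)) ^ 2).im|) := by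
  rw [one_div]
  refine ⟨fun l hl => ?_, fun l hl => ?_⟩
  · have hslit : -l ∈ slitPlane := Or.inl (by simpa using hl)
    exact (((differentiableAt_id.neg.cpow_const hslit).const_add _).pow 2).neg
      |>.differentiableWithinAt
  · exact re_neg_sq_add_lt ht.le (abs_im_lt_re_cpow_inv_two (by simpa using hl))
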